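/- Let T_1 and T_2 be bounded linear operators on a complex Hilbert space H. Then ‖T_1 + T_2‖² ≤ ω(T_1*(T_1 + T_2)) + ω(T_2*(T_1 + T_2)). -/

import Mathlib

open ContinuousLinearMap

/-- The numerical radius of a bounded linear operator on a complex Hilbert space:
`ω(T) = sup_{‖x‖ = 1} |⟨Tx, x⟩|`. -/
noncomputable def numRadius {H : Type*} [NormedAddCommGroup H] [InnerProductSpace ℂ H]
    (T : H →L[ℂ] H) : ℝ :=
  ⨆ x : {x : H // ‖x‖ = 1}, ‖(inner ℂ (T x) (x : H) : ℂ)‖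

/-! Writing `S = T₁ + T₂`, for a unit vector `x` we have
`‖S x‖² = ⟪S x, T₁ x⟫ + ⟪S x, T₂ x⟫ = ⟪T₁† S x, x⟫ + ⟪T₂† S x, x⟫`, and the two terms are bounded
by the numerical radii of `T₁† S` and `T₂† S`; taking the supremum over `x` bounds `‖S‖²`. -/

theorem ContinuousLinearMap.opNorm_sq_le_of_unit_norm_sq {𝕜 E F : Type*} [RCLike 𝕜]
    [NormedAddCommGroup E] [NormedSpace 𝕜 E] [NormedAddCommGroup F] [NormedSpace 𝕜 F]
    {f : E →L[𝕜] F} {C : ℝ} (hC : 0 ≤ C) (hf : ∀ x, ‖x‖ = 1 → ‖f x‖ ^ 2 ≤ C) :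
    ‖f‖ ^ 2 ≤ C := by
  have hsqrt : ‖f‖ ≤ √C := opNorm_le_of_unit_norm (Real.sqrt_nonneg C) fun x hx =>
    (Real.le_sqrt (norm_nonneg _) hC).2 (hf x hx)
  exact (Real.le_sqrt (norm_nonneg _) hC).1 hsqrt

theorem inner_adjoint_comp_apply_self {𝕜 E F : Type*} [RCLike 𝕜]
    [NormedAddCommGroup E] [InnerProductSpace 𝕜 E] [CompleteSpace E]
    [NormedAddCommGroup F] [InnerProductSpace 𝕜 F] [CompleteSpace F]
    (A B : E →L[𝕜] F) (x : E) :
    inner 𝕜 ((adjoint A ∘L B) x) x = inner 𝕜 (B x) (A x) :=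
  adjoint_inner_left A x (B x)

theorem norm_add_apply_sq_le {𝕜 E F : Type*} [RCLike 𝕜]
    [NormedAddCommGroup E] [InnerProductSpace 𝕜 E] [CompleteSpace E]
    [NormedAddCommGroup F] [InnerProductSpace 𝕜 F] [CompleteSpace F]
    (T₁ T₂ : E →L[𝕜] F) (x : E) :
    ‖(T₁ + T₂) x‖ ^ 2 ≤
      ‖inner 𝕜 ((adjoint T₁ ∘L (T₁ + T₂)) x) x‖ + ‖inner 𝕜 ((adjoint T₂ ∘L (T₁ + T₂)) x) x‖ := by
  have hsplit : ‖(T₁ + T₂) x‖ ^ 2 =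
      ‖inner 𝕜 ((T₁ + T₂) x) (T₁ x) + inner 𝕜 ((T₁ + T₂) x) (T₂ x)‖ := by
    rw [← inner_add_right, ← add_apply, ← inner_self_re_eq_norm, inner_self_eq_norm_sq]
  rw [hsplit, inner_adjoint_comp_apply_self, inner_adjoint_comp_apply_self]
  exact norm_add_le _ _

section numRadius

variable {H : Type*} [NormedAddCommGroup H] [InnerProductSpace ℂ H]

theorem numRadius_nonneg (A : H →L[ℂ] H) : 0 ≤ numRadius A :=
  Real.iSup_nonneg fun _ => norm_nonneg _

theorem norm_inner_le_numRadius (A : H →L[ℂ] H) {x : H} (hx : ‖x‖ = 1) :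
    ‖(inner ℂ (A x) x : ℂ)‖ ≤ numRadius A := by
  have hbdd : BddAbove (Set.range fun y : {y : H // ‖y‖ = 1} => ‖(inner ℂ (A y) (y : H) : ℂ)‖) := by
    refine ⟨‖A‖, ?_⟩
    rintro _ ⟨y, rfl⟩
    calc ‖(inner ℂ (A y) (y : H) : ℂ)‖ ≤ ‖A y‖ * ‖(y : H)‖ := norm_inner_le_norm _ _
      _ ≤ ‖A‖ * ‖(y : H)‖ * ‖(y : H)‖ := by gcongr; exact A.le_opNorm _
      _ = ‖A‖ := by rw [y.2, mul_one, mul_one]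
  exact le_ciSup hbdd ⟨x, hx⟩

end numRadius

theorem norm_sq_add_le_numRadius_add_numRadius
    {H : Type*} [NormedAddCommGroup H] [InnerProductSpace ℂ H] [CompleteSpace H]
    (T₁ T₂ : H →L[ℂ] H) :
    ‖T₁ + T₂‖ ^ 2 ≤
      numRadius (adjoint T₁ ∘L (T₁ + T₂)) + numRadius (adjoint T₂ ∘L (T₁ + T₂)) := by
  refine opNorm_sq_le_of_unit_norm_sq (add_nonneg (numRadius_nonneg _) (numRadius_nonneg _))
    fun x hx => ?_
  exact (norm_add_apply_sq_le T₁ T₂ x).trans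
    (add_le_add (norm_inner_le_numRadius _ hx) (norm_inner_le_numRadius _ hx))
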